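/- arXiv:1004.4724 — 3 statements merged into one kernel-verified Lean document; each statement's English description precedes it below -/
import Mathlib

section
/- Let Ω₁(x) = x₀x₁ + x₂x₃ + x₄x₅ and Ω₂(x) = x₁x₂ + x₃x₄ + x₅x₆ be quadratic forms on k⁷ with coordinates (x₀,…,x₆), k an algebraically closed field of characteristic ≠ 2. Then every nonzero quadratic form in the pencil λΩ₁ + μΩ₂ has rank exactly 6. -/
open Matrix

/-- Twice the Gram matrix of the quadratic form `Ω₁(x) = x₀x₁ + x₂x₃ + x₄x₅` on `k⁷`. -/
def gramOmega1 (k : Type*) [Field k] : Matrix (Fin 7) (Fin 7) k :=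
  !![0,1,0,0,0,0,0;
     1,0,0,0,0,0,0;
     0,0,0,1,0,0,0;
     0,0,1,0,0,0,0;
     0,0,0,0,0,1,0;
     0,0,0,0,1,0,0;
     0,0,0,0,0,0,0]

/-- Twice the Gram matrix of the quadratic form `Ω₂(x) = x₁x₂ + x₃x₄ + x₅x₆` on `k⁷`. -/
def gramOmega2 (k : Type*) [Field k] : Matrix (Fin 7) (Fin 7) k :=
  !![0,0,0,0,0,0,0;
     0,0,1,0,0,0,0;
     0,1,0,0,0,0,0;
     0,0,0,0,1,0,0;
     0,0,0,1,0,0,0;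
     0,0,0,0,0,0,1;
     0,0,0,0,0,1,0]

/-!
The matrix of `λΩ₁ + μΩ₂` is tridiagonal with zero diagonal and off-diagonal entries
`λ, μ, λ, μ, λ, μ`. Such a matrix of odd size has a kernel vector supported on the even
coordinates, so its rank is at most `6`. Deleting the last (if `λ ≠ 0`) or the first
(if `μ ≠ 0`) row and column leaves a `6 × 6` matrix of the same shape with determinant
`-λ⁶` resp. `-μ⁶`, so the rank is at least `6`.
-/

namespace Matrix

variable {K : Type*} [Field K]

theorem rank_lt_card_of_mulVec_eq_zero {n : Type*} [Fintype n] {A : Matrix n n K}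
    {v : n → K} (hv : v ≠ 0) (hAv : A *ᵥ v = 0) : A.rank < Fintype.card n := by
  have hker : 0 < Module.finrank K (LinearMap.ker A.mulVecLin) :=
    Module.finrank_pos_iff_exists_ne_zero.mpr
      ⟨⟨v, by simpa using hAv⟩, by simpa using hv⟩
  have hsum := LinearMap.finrank_range_add_finrank_ker A.mulVecLin
  rw [Module.finrank_fintype_fun_eq_card] at hsum
  rw [rank]
  omega

theorem card_le_rank_of_det_submatrix_ne_zero {m n m₀ : Type*} [Fintype n] [Fintype m₀]
    [DecidableEq m₀] (A : Matrix m n K) (r : m₀ → m) (c : m₀ → n)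
    (h : (A.submatrix r c).det ≠ 0) : Fintype.card m₀ ≤ A.rank :=
  rank_of_det_ne_zero h ▸ rank_submatrix_le A r c

end Matrix

section Pencil

variable {k : Type*} [Field k]

theorem dotProduct_gramOmega1_mulVec (x : Fin 7 → k) :
    x ⬝ᵥ (gramOmega1 k).mulVec x = 2 * (x 0 * x 1 + x 2 * x 3 + x 4 * x 5) := by
  simp [gramOmega1, dotProduct, mulVec, Fin.sum_univ_seven]
  ring

theorem dotProduct_gramOmega2_mulVec (x : Fin 7 → k) :
    x ⬝ᵥ (gramOmega2 k).mulVec x = 2 * (x 1 * x 2 + x 3 * x 4 + x 5 * x 6) := by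
  simp [gramOmega2, dotProduct, mulVec, Fin.sum_univ_seven]
  ring

def pencilMatrix (l m : k) : Matrix (Fin 7) (Fin 7) k :=
  !![0,l,0,0,0,0,0;
     l,0,m,0,0,0,0;
     0,m,0,l,0,0,0;
     0,0,l,0,m,0,0;
     0,0,0,m,0,l,0;
     0,0,0,0,l,0,m;
     0,0,0,0,0,m,0]

def tridiagSix (a b : k) : Matrix (Fin 6) (Fin 6) k :=
  !![0,a,0,0,0,0;
     a,0,b,0,0,0;
     0,b,0,a,0,0;
     0,0,a,0,b,0;
     0,0,0,b,0,a;
     0,0,0,0,a,0]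

theorem smul_gramOmega1_add_smul_gramOmega2 (l m : k) :
    l • gramOmega1 k + m • gramOmega2 k = pencilMatrix l m := by
  ext i j
  fin_cases i <;> fin_cases j <;> simp [gramOmega1, gramOmega2, pencilMatrix]

theorem det_tridiagSix (a b : k) : (tridiagSix a b).det = -a ^ 6 := by
  simp [tridiagSix, det_succ_row_zero, Fin.sum_univ_succ, Fin.succAbove]
  ring

theorem pencilMatrix_submatrix_castSucc (l m : k) :
    (pencilMatrix l m).submatrix Fin.castSucc Fin.castSucc = tridiagSix l m := by
  ext i j
  fin_cases i <;> fin_cases j <;> rfl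

theorem pencilMatrix_submatrix_succ (l m : k) :
    (pencilMatrix l m).submatrix Fin.succ Fin.succ = tridiagSix m l := by
  ext i j
  fin_cases i <;> fin_cases j <;> rfl

-- The odd rows force `l xᵢ + m xᵢ₊₂ = 0` on the even coordinates: a geometric progression.
theorem pencilMatrix_mulVec_eq_zero (l m : k) :
    pencilMatrix l m *ᵥ ![m ^ 3, 0, -(l * m ^ 2), 0, l ^ 2 * m, 0, -l ^ 3] = 0 := by
  ext i
  fin_cases i <;> simp [pencilMatrix, mulVec, dotProduct, Fin.sum_univ_seven] <;> ring

theorem rank_pencilMatrix_le (l m : k) (hlm : ¬(l = 0 ∧ m = 0)) :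
    (pencilMatrix l m).rank ≤ 6 := by
  have hv : ![m ^ 3, 0, -(l * m ^ 2), 0, l ^ 2 * m, 0, -l ^ 3] ≠ 0 := fun h => hlm
    ⟨by simpa using congrFun h 6, by simpa using congrFun h 0⟩
  exact Nat.le_of_lt_succ <| by
    simpa using rank_lt_card_of_mulVec_eq_zero hv (pencilMatrix_mulVec_eq_zero l m)

theorem six_le_rank_pencilMatrix (l m : k) (hlm : ¬(l = 0 ∧ m = 0)) :
    6 ≤ (pencilMatrix l m).rank := by
  rcases not_and_or.mp hlm with hl | hm
  · refine le_of_eq_of_le (Fintype.card_fin 6).symm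
      (card_le_rank_of_det_submatrix_ne_zero _ Fin.castSucc Fin.castSucc ?_)
    rw [pencilMatrix_submatrix_castSucc, det_tridiagSix]
    exact neg_ne_zero.mpr (pow_ne_zero 6 hl)
  · refine le_of_eq_of_le (Fintype.card_fin 6).symm
      (card_le_rank_of_det_submatrix_ne_zero _ Fin.succ Fin.succ ?_)
    rw [pencilMatrix_submatrix_succ, det_tridiagSix]
    exact neg_ne_zero.mpr (pow_ne_zero 6 hm)

end Pencil

theorem stmt_1_general {k : Type*} [Field k] :
    (∀ x : Fin 7 → k,
        x ⬝ᵥ (gramOmega1 k).mulVec x = 2 * (x 0 * x 1 + x 2 * x 3 + x 4 * x 5) ∧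
        x ⬝ᵥ (gramOmega2 k).mulVec x = 2 * (x 1 * x 2 + x 3 * x 4 + x 5 * x 6)) ∧
    ∀ l m : k, ¬(l = 0 ∧ m = 0) →
      (l • gramOmega1 k + m • gramOmega2 k).rank = 6 :=
  ⟨fun x => ⟨dotProduct_gramOmega1_mulVec x, dotProduct_gramOmega2_mulVec x⟩,
    fun l m hlm => smul_gramOmega1_add_smul_gramOmega2 l m ▸
      le_antisymm (rank_pencilMatrix_le l m hlm) (six_le_rank_pencilMatrix l m hlm)⟩

/-- Over an algebraically closed field of characteristic `≠ 2`, the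
matrices above represent the quadratic forms `Ω₁`, `Ω₂` (via `x ⬝ B x = 2·Ω(x)`), and
every nonzero form `λΩ₁ + μΩ₂` in the pencil has rank exactly `6`. -/
theorem stmt_1 {k : Type*} [Field k] [IsAlgClosed k] (h2 : (2 : k) ≠ 0) :
    (∀ x : Fin 7 → k,
        x ⬝ᵥ (gramOmega1 k).mulVec x = 2 * (x 0 * x 1 + x 2 * x 3 + x 4 * x 5) ∧
        x ⬝ᵥ (gramOmega2 k).mulVec x = 2 * (x 1 * x 2 + x 3 * x 4 + x 5 * x 6)) ∧
    ∀ l m : k, ¬(l = 0 ∧ m = 0) →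
      (l • gramOmega1 k + m • gramOmega2 k).rank = 6 :=
  stmt_1_general
end

section
/- With Ω₁ and Ω₂ as above, for (λ:μ) ∈ P¹ the kernel of the Gram matrix of the rank-6 quadratic form λΩ₁ + μΩ₂ is one-dimensional, and, as (λ:μ) varies, these kernels trace out a rational normal cubic curve in the projective 3-space P³_W = { x₁ = x₃ = x₅ = 0 }. -/
open Matrix

section VecHelpers

variable {α : Type*} (a b c d e f g : α)

lemma vec7_0 : ![a,b,c,d,e,f,g] (0:Fin 7) = a := rfl
lemma vec7_1 : ![a,b,c,d,e,f,g] (1:Fin 7) = b := rfl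
lemma vec7_2 : ![a,b,c,d,e,f,g] (2:Fin 7) = c := rfl
lemma vec7_3 : ![a,b,c,d,e,f,g] (3:Fin 7) = d := rfl
lemma vec7_4 : ![a,b,c,d,e,f,g] (4:Fin 7) = e := rfl
lemma vec7_5 : ![a,b,c,d,e,f,g] (5:Fin 7) = f := rfl
lemma vec7_6 : ![a,b,c,d,e,f,g] (6:Fin 7) = g := rfl

lemma funext7 (u v : Fin 7 → α) (h0 : u 0 = v 0) (h1 : u 1 = v 1) (h2 : u 2 = v 2)
    (h3 : u 3 = v 3) (h4 : u 4 = v 4) (h5 : u 5 = v 5) (h6 : u 6 = v 6) : u = v := by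
  funext i
  fin_cases i
  exacts [h0, h1, h2, h3, h4, h5, h6]

end VecHelpers

lemma gram_mulVec_eq {k : Type*} [Field k] (l m : k) (w : Fin 7 → k) :
    (l • gramOmega1 k + m • gramOmega2 k).mulVec w =
      ![l * w 1, l * w 0 + m * w 2, m * w 1 + l * w 3, l * w 2 + m * w 4,
        m * w 3 + l * w 5, l * w 4 + m * w 6, m * w 5] := by
  apply funext7 <;>
    · simp only [gramOmega1, gramOmega2, Matrix.mulVec, dotProduct,
        Fin.sum_univ_seven, Matrix.add_apply, Matrix.smul_apply, Matrix.of_apply,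
        vec7_0, vec7_1, vec7_2, vec7_3, vec7_4, vec7_5, vec7_6, smul_eq_mul]
      ring

lemma ker_char {k : Type*} [Field k] (l m : k) (hlm : ¬(l = 0 ∧ m = 0)) (w : Fin 7 → k)
    (e0 : l * w 1 = 0) (e1 : l * w 0 + m * w 2 = 0) (e2 : m * w 1 + l * w 3 = 0)
    (e3 : l * w 2 + m * w 4 = 0) (e4 : m * w 3 + l * w 5 = 0) (e5 : l * w 4 + m * w 6 = 0)
    (e6 : m * w 5 = 0) :
    ∃ c : k, w = c • ![m ^ 3, 0, -(l * m ^ 2), 0, l ^ 2 * m, 0, -(l ^ 3)] := by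
  by_cases hm : m = 0
  · have hl : l ≠ 0 := fun h => hlm ⟨h, hm⟩
    subst hm
    have key : ∀ x : k, l * x = 0 → x = 0 := fun x hx => by
      rcases mul_eq_zero.mp hx with h | h
      · exact absurd h hl
      · exact h
    have w1 : w 1 = 0 := key _ e0
    have w0 : w 0 = 0 := key _ (by linear_combination e1)
    have w3 : w 3 = 0 := key _ (by linear_combination e2)
    have w2 : w 2 = 0 := key _ (by linear_combination e3)
    have w5 : w 5 = 0 := key _ (by linear_combination e4)
    have w4 : w 4 = 0 := key _ (by linear_combination e5)
    refine ⟨-(w 6) / l ^ 3, ?_⟩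
    apply funext7 <;>
      simp only [Pi.smul_apply, vec7_0, vec7_1, vec7_2, vec7_3, vec7_4, vec7_5, vec7_6,
        smul_eq_mul, w0, w1, w2, w3, w4, w5, mul_zero] <;>
      field_simp <;> ring
  · have key : ∀ x : k, m * x = 0 → x = 0 := fun x hx => by
      rcases mul_eq_zero.mp hx with h | h
      · exact absurd h hm
      · exact h
    have w5 : w 5 = 0 := key _ e6
    have w3 : w 3 = 0 := key _ (by linear_combination e4 - l * w5)
    have w1 : w 1 = 0 := key _ (by linear_combination e2 - l * w3)
    have hw2 : m * w 2 = -(l * w 0) := by linear_combination e1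
    have hw4 : m ^ 2 * w 4 = l ^ 2 * w 0 := by linear_combination m * e3 - l * hw2
    have hw6 : m ^ 3 * w 6 = -(l ^ 3 * w 0) := by linear_combination m ^ 2 * e5 - l * hw4
    refine ⟨w 0 / m ^ 3, ?_⟩
    apply funext7 <;>
      simp only [Pi.smul_apply, vec7_0, vec7_1, vec7_2, vec7_3, vec7_4, vec7_5, vec7_6,
        smul_eq_mul, w1, w3, w5, mul_zero]
    · field_simp
    · field_simp
      linear_combination hw2
    · field_simp
      linear_combination hw4
    · field_simp
      linear_combination hw6

/-- For `(λ:μ) ∈ P¹`, the kernel of the Gram matrix of the rank-6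
quadratic form `λΩ₁ + μΩ₂` is one-dimensional, spanned by the vector
`v(λ,μ) = (μ³, 0, −λμ², 0, λ²μ, 0, −λ³)`.  This vector lies in
`P³_W = {x₁ = x₃ = x₅ = 0}`, and its nonzero coordinates `(μ³, −λμ², λ²μ, −λ³)` are the
cubic Veronese monomials in `(λ, μ)`: as `(λ:μ)` varies, the kernels trace out a rational
normal cubic curve in `P³_W`. -/
theorem stmt_3 {k : Type*} [Field k] (h2 : (2 : k) ≠ 0) (l m : k) (hlm : ¬(l = 0 ∧ m = 0)) :
    letI B := l • gramOmega1 k + m • gramOmega2 k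
    letI v : Fin 7 → k := ![m ^ 3, 0, -(l * m ^ 2), 0, l ^ 2 * m, 0, -(l ^ 3)]
    v ≠ 0 ∧ B.mulVec v = 0 ∧
      (∀ w : Fin 7 → k, B.mulVec w = 0 ↔ ∃ c : k, w = c • v) ∧
      v 1 = 0 ∧ v 3 = 0 ∧ v 5 = 0 := by
  refine ⟨?_, ?_, ?_, rfl, rfl, rfl⟩
  · intro hv
    by_cases hm : m = 0
    · have hl : l ≠ 0 := fun h => hlm ⟨h, hm⟩
      have h6 := congrFun hv 6
      rw [vec7_6] at h6
      simp only [Pi.zero_apply, neg_eq_zero] at h6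
      exact hl (pow_eq_zero_iff (n := 3) (by norm_num) |>.mp h6)
    · have h0 := congrFun hv 0
      rw [vec7_0] at h0
      simp only [Pi.zero_apply] at h0
      exact hm (pow_eq_zero_iff (n := 3) (by norm_num) |>.mp h0)
  · rw [gram_mulVec_eq]
    apply funext7 <;>
      · simp only [vec7_0, vec7_1, vec7_2, vec7_3, vec7_4, vec7_5, vec7_6, Pi.zero_apply]
        ring
  · intro w
    constructor
    · intro hw
      rw [gram_mulVec_eq] at hw
      have h0 := congrFun hw 0
      have h1 := congrFun hw 1
      have h2' := congrFun hw 2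
      have h3 := congrFun hw 3
      have h4 := congrFun hw 4
      have h5 := congrFun hw 5
      have h6 := congrFun hw 6
      rw [vec7_0] at h0; rw [vec7_1] at h1; rw [vec7_2] at h2'; rw [vec7_3] at h3
      rw [vec7_4] at h4; rw [vec7_5] at h5; rw [vec7_6] at h6
      simp only [Pi.zero_apply] at h0 h1 h2' h3 h4 h5 h6
      exact ker_char l m hlm w h0 h1 h2' h3 h4 h5 h6
    · rintro ⟨c, rfl⟩
      rw [gram_mulVec_eq]
      apply funext7 <;>
        · simp only [Pi.smul_apply, vec7_0, vec7_1, vec7_2, vec7_3, vec7_4, vec7_5, vec7_6,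
            smul_eq_mul, Pi.zero_apply]
          ring
end

section
/- Let V₈ ⊂ Λ²V₅ be the codimension-2 subspace cut out by x₁₄ + x₂₅ = 0 and x₁₅ + x₃₄ = 0 in Plücker coordinates for a 5-dimensional space V₅, and let W = G(2, V₅) ∩ P(V₈). Then the plane Π = P(span(e₁₂, e₁₃, e₂₃)) = G(2, U₃) is contained in W, and the tangent space to W at O = [e₄∧e₅], given by the equations x₁₂ = x₁₃ = x₂₃ = x₁₄ + x₂₅ = x₁₅ + x₃₄ = 0 inside P(Λ²V₅), is disjoint from Π. -/
open Matrix

/-- Model `Λ²V₅` as the space of skew-symmetric `5 × 5` matrices,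
with `v ∧ w` corresponding to `v·wᵀ − w·vᵀ` (so the Plücker coordinate `x_{ij}` of `M`
is `M i j`, indices shifted to `0,…,4`).  Let `V₈` be the codimension-2 subspace cut out
by `x₁₄ + x₂₅ = 0` and `x₁₅ + x₃₄ = 0`, and let (the affine cone over)
`W = G(2,V₅) ∩ P(V₈)` be the set of decomposable skew matrices satisfying these
equations.  Then:
* the plane `Π = G(2, U₃)` — wedges of vectors of `U₃ = span(e₁,e₂,e₃)` — is contained
  in `W`;
* the point `O = [e₄ ∧ e₅]` lies in the (affine cone over the) tangent space `T` to `W`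
  at `O`, given by `x₁₂ = x₁₃ = x₂₃ = x₁₄ + x₂₅ = x₁₅ + x₃₄ = 0`;
* `T` is disjoint from `Π` (the cones meet only in `0`). -/
theorem stmt_19 {k : Type*} [Field k] :
    letI wedge : (Fin 5 → k) → (Fin 5 → k) → Matrix (Fin 5) (Fin 5) k :=
      fun v w => Matrix.of fun i j => v i * w j - v j * w i
    letI U₃ : Set (Fin 5 → k) := {v | v 3 = 0 ∧ v 4 = 0}
    letI Wcone : Set (Matrix (Fin 5) (Fin 5) k) :=
      {M | (∃ v w : Fin 5 → k, M = wedge v w) ∧ M 0 3 + M 1 4 = 0 ∧ M 0 4 + M 2 3 = 0}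
    letI PiCone : Set (Matrix (Fin 5) (Fin 5) k) :=
      {M | ∃ v ∈ U₃, ∃ w ∈ U₃, M = wedge v w}
    letI T : Set (Matrix (Fin 5) (Fin 5) k) :=
      {M | Mᵀ = -M ∧ M 0 1 = 0 ∧ M 0 2 = 0 ∧ M 1 2 = 0 ∧
           M 0 3 + M 1 4 = 0 ∧ M 0 4 + M 2 3 = 0}
    PiCone ⊆ Wcone ∧
    wedge (Pi.single 3 1) (Pi.single 4 1) ∈ T ∧
    (∀ M ∈ T, M ∈ PiCone → M = 0) := by
  refine ⟨?_, ?_, ?_⟩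
  · rintro M ⟨v, ⟨hv3, hv4⟩, w, ⟨hw3, hw4⟩, rfl⟩
    exact ⟨⟨v, w, rfl⟩, by simp [Matrix.of_apply, hv3, hv4, hw3, hw4], by simp [Matrix.of_apply, hv3, hv4, hw3, hw4]⟩
  · refine ⟨?_, ?_, ?_, ?_, ?_, ?_⟩
    · ext i j
      simp only [Matrix.transpose_apply, Matrix.neg_apply, Matrix.of_apply]
      ring
    all_goals simp [Matrix.of_apply, Pi.single_apply]
  · rintro M ⟨-, h01, h02, h12, -, -⟩ ⟨v, ⟨hv3, hv4⟩, w, ⟨hw3, hw4⟩, rfl⟩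
    ext i j
    fin_cases i <;> fin_cases j <;>
      simp_all [Matrix.of_apply, hv3, hv4, hw3, hw4] <;>
      first
        | linear_combination -h01
        | linear_combination -h02
        | linear_combination -h12
end
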